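/- The Kantorovich-Rubinstein distance between the uniform distribution on S_n and the uniform distribution on the set of n-cycles in S_n is at most (ln(n)+1)/n. -/

import Mathlib

open Equiv Finset

/-- The normalized Hamming distance on `Perm (Fin n)`. -/
noncomputable def hamming {n : ℕ} (σ τ : Equiv.Perm (Fin n)) : ℝ :=
  ((Finset.univ.filter fun i => σ i ≠ τ i).card : ℝ) / n

/-- `γ` is a coupling of the probability mass functions `μ` and `ν` on `S_n`. -/
def IsCoupling {n : ℕ} (γ : Equiv.Perm (Fin n) × Equiv.Perm (Fin n) → ℝ)
    (μ ν : Equiv.Perm (Fin n) → ℝ) : Prop :=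
  (∀ p, 0 ≤ γ p) ∧ (∀ σ, ∑ τ, γ (σ, τ) = μ σ) ∧ (∀ τ, ∑ σ, γ (σ, τ) = ν τ)

/-- The Kantorovich-Rubinstein distance between probability mass functions on
`S_n`, with respect to the normalized Hamming metric. -/
noncomputable def KR {n : ℕ} (μ ν : Equiv.Perm (Fin n) → ℝ) : ℝ :=
  sInf {c | ∃ γ, IsCoupling γ μ ν ∧ c = ∑ p, γ p * hamming p.1 p.2}

/-- The uniform probability mass function on a subset `A` of `S_n`. -/
noncomputable def unifOn {n : ℕ} (A : Set (Equiv.Perm (Fin n))) :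
    Equiv.Perm (Fin n) → ℝ :=
  A.indicator fun _ => ((A.ncard : ℝ))⁻¹

/-- The number of cycles of a permutation, counting fixed points as cycles. -/
noncomputable def cycleCount {n : ℕ} (σ : Equiv.Perm (Fin n)) : ℕ :=
  σ.cycleType.card + (Finset.univ.filter fun i => σ i = i).card

/-!
Read `ρ ∈ S_n` as the word `ρ 0 ρ 1 ⋯ ρ (n-1)` and cut it before each left-to-right minimum
("record").  Closing each block into a cycle gives a permutation `foata ρ` (Foata's
transformation), while closing the whole word into one cycle gives the `n`-cycle `wordCycle ρ`.
The two differ only at the last letter of each block, so their Hamming distance is at most the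
number of records divided by `n`.  The records are exactly the cycle minima of `foata ρ`, which
lets one read `ρ` back off `foata ρ`, so `foata` is a bijection; and `wordCycle` hits every
`n`-cycle equally often.  Hence for uniform `ρ` the pair `(foata ρ, wordCycle ρ)` couples the two
uniform laws.  Position `i` is a record with probability `1/(i+1)`, so the expected cost is
`H_n / n ≤ (log n + 1) / n`.
-/

open scoped Nat

section Coupling

variable {n : ℕ} {μ ν : Perm (Fin n) → ℝ}

lemma IsCoupling.sum_eq_sum {γ : Perm (Fin n) × Perm (Fin n) → ℝ} (hγ : IsCoupling γ μ ν) :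
    ∑ σ, μ σ = ∑ τ, ν τ := by
  simp only [← hγ.2.1, ← hγ.2.2]
  exact Finset.sum_comm

lemma KR_eq_zero_of_sum_ne (h : ∑ σ, μ σ ≠ ∑ τ, ν τ) : KR μ ν = 0 := by
  refine (congrArg sInf (Set.eq_empty_of_forall_notMem ?_)).trans Real.sInf_empty
  rintro c ⟨γ, hγ, -⟩
  exact h hγ.sum_eq_sum

lemma hamming_nonneg (σ τ : Perm (Fin n)) : 0 ≤ hamming σ τ := by
  unfold hamming
  positivity

lemma KR_le_of_isCoupling {γ : Perm (Fin n) × Perm (Fin n) → ℝ} (hγ : IsCoupling γ μ ν) :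
    KR μ ν ≤ ∑ p, γ p * hamming p.1 p.2 := by
  refine csInf_le ⟨0, ?_⟩ ⟨γ, hγ, rfl⟩
  rintro c ⟨γ', hγ', rfl⟩
  exact Finset.sum_nonneg fun p _ => mul_nonneg (hγ'.1 p) (hamming_nonneg _ _)

variable {ι : Type*} [Fintype ι]

lemma card_filter_div_card_eq_unifOn [Nonempty ι] {A : Set (Perm (Fin n))} {g : ι → Perm (Fin n)}
    {k : ℕ} (hgA : ∀ a, g a ∈ A) (hk : ∀ τ ∈ A, #{a | g a = τ} = k) (τ : Perm (Fin n)) :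
    (#{a | g a = τ} : ℝ) / Fintype.card ι = unifOn A τ := by
  obtain ⟨s, rfl⟩ := A.toFinite.exists_finset_coe
  have hcard : Fintype.card ι = #s * k := by
    rw [← Finset.card_univ, card_eq_sum_card_fiberwise fun a _ => hgA a, Finset.sum_congr rfl hk,
      sum_const, smul_eq_mul]
  have hk0 : k ≠ 0 := by
    obtain ⟨a⟩ := ‹Nonempty ι›
    rw [← hk (g a) (hgA a)]
    exact card_ne_zero_of_mem (mem_filter.2 ⟨mem_univ a, rfl⟩)
  by_cases hτ : τ ∈ s
  · rw [hk τ hτ, unifOn, Set.indicator_of_mem (by simpa), Set.ncard_coe_finset, hcard]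
    push_cast
    field_simp
  · rw [unifOn, Set.indicator_of_notMem (by simpa),
      card_eq_zero.2 (filter_eq_empty_iff.2 fun a _ (h : g a = τ) => hτ (h ▸ hgA a)),
      Nat.cast_zero, zero_div]

noncomputable def lawCoupling (f g : ι → Perm (Fin n)) (p : Perm (Fin n) × Perm (Fin n)) : ℝ :=
  #{a | (f a, g a) = p} / Fintype.card ι

lemma sum_lawCoupling_left (f g : ι → Perm (Fin n)) (σ : Perm (Fin n)) :
    ∑ τ, lawCoupling f g (σ, τ) = #{a | f a = σ} / Fintype.card ι := by
  simp only [lawCoupling, ← Finset.sum_div, ← Nat.cast_sum]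
  rw [card_eq_sum_card_fiberwise (f := g) (t := univ) (by simp)]
  simp [filter_filter, Prod.ext_iff]

lemma sum_lawCoupling_right (f g : ι → Perm (Fin n)) (τ : Perm (Fin n)) :
    ∑ σ, lawCoupling f g (σ, τ) = #{a | g a = τ} / Fintype.card ι := by
  simp only [lawCoupling, ← Finset.sum_div, ← Nat.cast_sum]
  rw [card_eq_sum_card_fiberwise (f := f) (t := univ) (by simp)]
  simp [filter_filter, Prod.ext_iff, and_comm]

lemma sum_lawCoupling_mul (f g : ι → Perm (Fin n)) (c : Perm (Fin n) × Perm (Fin n) → ℝ) :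
    ∑ p, lawCoupling f g p * c p = (∑ a, c (f a, g a)) / Fintype.card ι := by
  simp only [lawCoupling, div_mul_eq_mul_div, ← Finset.sum_div, Finset.card_filter, Nat.cast_sum,
    Finset.sum_mul]
  rw [Finset.sum_comm]
  simp

lemma isCoupling_lawCoupling [Nonempty ι] {A B : Set (Perm (Fin n))} {f g : ι → Perm (Fin n)}
    {k l : ℕ} (hfA : ∀ a, f a ∈ A) (hk : ∀ σ ∈ A, #{a | f a = σ} = k) (hgB : ∀ a, g a ∈ B)
    (hl : ∀ τ ∈ B, #{a | g a = τ} = l) :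
    IsCoupling (lawCoupling f g) (unifOn A) (unifOn B) :=
  ⟨fun p => by unfold lawCoupling; positivity,
    fun σ => by rw [sum_lawCoupling_left, card_filter_div_card_eq_unifOn hfA hk],
    fun τ => by rw [sum_lawCoupling_right, card_filter_div_card_eq_unifOn hgB hl]⟩

end Coupling

-- Every `ρ` attains its minimum over `s` at exactly one position, and right multiplication by
-- `swap j i` moves that position from `i` to `j`.
lemma card_mul_card_filter_forall_le {α : Type*} [Fintype α] [DecidableEq α] [LinearOrder α]
    {s : Finset α} {i : α} (hi : i ∈ s) :
    #s * #{ρ : Perm α | ∀ k ∈ s, ρ i ≤ ρ k} = (Fintype.card α)! := by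
  set P : α → Finset (Perm α) := fun j => {ρ | ∀ k ∈ s, ρ j ≤ ρ k}
  have hP : ∀ j ∈ s, #(P j) = #(P i) := fun j hj => by
    refine card_equiv (Equiv.mulRight (swap j i)) fun ρ => ?_
    have hswap : ∀ k ∈ s, swap j i k ∈ s := fun k hk => by
      rw [swap_apply_def]; split_ifs <;> assumption
    simp only [P, mem_filter, mem_univ, true_and, coe_mulRight, Perm.mul_apply, swap_apply_right]
    refine ⟨fun h k hk => h _ (hswap k hk), fun h k hk => ?_⟩
    simpa using h _ (hswap k hk)
  have hcover : s.biUnion P = univ := eq_univ_of_forall fun ρ => by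
    obtain ⟨j, hj, hmin⟩ := s.exists_min_image ρ ⟨i, hi⟩
    exact mem_biUnion.2 ⟨j, hj, mem_filter.2 ⟨mem_univ ρ, hmin⟩⟩
  have hdisj : (s : Set α).PairwiseDisjoint P := fun j₁ hj₁ j₂ hj₂ hne =>
    disjoint_left.2 fun ρ h₁ h₂ => hne <| ρ.injective <|
      le_antisymm ((mem_filter.1 h₁).2 j₂ hj₂) ((mem_filter.1 h₂).2 j₁ hj₁)
  calc #s * #(P i) = ∑ j ∈ s, #(P j) := by rw [sum_congr rfl hP, sum_const, smul_eq_mul]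
    _ = (Fintype.card α)! := by
      rw [← card_biUnion hdisj, hcover, card_univ, Fintype.card_perm]

lemma card_filter_conj_eq {G : Type*} [Group G] [Fintype G] [DecidableEq G] (c z : G) :
    #{g : G | g * c * g⁻¹ = z * c * z⁻¹} = #{g : G | g * c * g⁻¹ = c} := by
  refine card_equiv (Equiv.mulLeft z⁻¹) fun g => ?_
  have hconj : z⁻¹ * g * c * (z⁻¹ * g)⁻¹ = z⁻¹ * (g * c * g⁻¹) * z := by group
  simp only [mem_filter, mem_univ, true_and, coe_mulLeft, hconj]
  generalize g * c * g⁻¹ = x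
  constructor <;> rintro rfl <;> group

lemma val_finRotate {n : ℕ} (i : Fin n) :
    (finRotate n i).val = if i.val + 1 < n then i.val + 1 else 0 := by
  cases n with
  | zero => exact i.elim0
  | succ m =>
    rw [coe_finRotate]
    simp [Fin.ext_iff, Nat.lt_iff_le_and_ne, Nat.le_of_lt_succ i.isLt, eq_comm]

section Records

variable {n : ℕ}

def records (ρ : Perm (Fin n)) : Finset (Fin n) := {i | ∀ j < i, ρ i < ρ j}

variable (ρ : Perm (Fin n)) {i j : Fin n}

lemma mem_records : i ∈ records ρ ↔ ∀ j < i, ρ i < ρ j := by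
  simp [records]

lemma mem_records_of_val_eq_zero (hi : i.val = 0) : i ∈ records ρ :=
  (mem_records ρ).2 fun j hj => absurd hj (by simp [Fin.lt_def, hi])

variable {ρ} in
lemma apply_lt_of_mem_records (hj : j ∈ records ρ) (hij : i < j) : ρ j < ρ i :=
  (mem_records ρ).1 hj i hij

lemma mem_records_iff_forall_le : i ∈ records ρ ↔ ∀ k ∈ Iic i, ρ i ≤ ρ k := by
  simp only [mem_records, mem_Iic]
  refine ⟨fun h k hk => (eq_or_lt_of_le hk).elim (fun h => h ▸ le_rfl) fun hk => (h k hk).le,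
    fun h k hk => (h k hk.le).lt_of_ne fun he => hk.ne (ρ.injective he).symm⟩

lemma succ_mul_card_filter_mem_records (i : Fin n) :
    (i.val + 1) * #{ρ : Perm (Fin n) | i ∈ records ρ} = n ! := by
  simpa [← Fin.card_Iic, mem_records_iff_forall_le] using
    card_mul_card_filter_forall_le (α := Fin n) (mem_Iic.2 le_rfl)

lemma sum_card_records : ∑ ρ : Perm (Fin n), (#(records ρ) : ℝ) = n ! * harmonic n := by
  have hcount (i : Fin n) : (#{ρ : Perm (Fin n) | i ∈ records ρ} : ℝ) = n ! / (i.val + 1) := by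
    rw [eq_div_iff (by positivity), mul_comm]
    exact_mod_cast succ_mul_card_filter_mem_records i
  have hdouble :
      ∑ ρ : Perm (Fin n), #(records ρ) = ∑ i : Fin n, #{ρ : Perm (Fin n) | i ∈ records ρ} := by
    simpa [bipartiteAbove, bipartiteBelow] using
      sum_card_bipartiteAbove_eq_sum_card_bipartiteBelow (s := univ) (t := univ)
        (fun (ρ : Perm (Fin n)) i => i ∈ records ρ)
  rw [← Nat.cast_sum, hdouble, Nat.cast_sum]
  simp only [hcount, harmonic]
  rw [Fin.sum_univ_eq_sum_range (fun i => (n ! : ℝ) / (i + 1))]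
  push_cast
  simp [mul_sum, div_eq_mul_inv]

end Records

section Blocks

variable {n : ℕ} (ρ : Perm (Fin n)) {i j : Fin n}

def blockStart (i : Fin n) : Fin n :=
  ({j ∈ records ρ | j ≤ i}).max'
    ⟨⟨0, i.pos⟩, mem_filter.2 ⟨mem_records_of_val_eq_zero ρ rfl, Nat.zero_le _⟩⟩

lemma blockStart_mem_records (i : Fin n) : blockStart ρ i ∈ records ρ :=
  (mem_filter.1 (max'_mem {j ∈ records ρ | j ≤ i} _)).1

lemma blockStart_le (i : Fin n) : blockStart ρ i ≤ i :=
  (mem_filter.1 (max'_mem {j ∈ records ρ | j ≤ i} _)).2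

variable {ρ}

lemma le_blockStart (hj : j ∈ records ρ) (hji : j ≤ i) : j ≤ blockStart ρ i :=
  le_max' _ _ (mem_filter.2 ⟨hj, hji⟩)

lemma blockStart_eq_self (hi : i ∈ records ρ) : blockStart ρ i = i :=
  (blockStart_le ρ _).antisymm (le_blockStart hi le_rfl)

lemma val_finRotate_of_not_mem_records (h : finRotate n i ∉ records ρ) :
    (finRotate n i).val = i.val + 1 := by
  have hval := val_finRotate i
  split_ifs at hval
  · exact hval
  · exact absurd (mem_records_of_val_eq_zero ρ hval) h

lemma blockStart_finRotate (h : finRotate n i ∉ records ρ) :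
    blockStart ρ (finRotate n i) = blockStart ρ i := by
  have hval := val_finRotate_of_not_mem_records h
  have hle : blockStart ρ (finRotate n i) ≤ i := by
    have hne : blockStart ρ (finRotate n i) ≠ finRotate n i :=
      fun he => h (he ▸ blockStart_mem_records ρ _)
    have := blockStart_le ρ (finRotate n i)
    rw [Fin.le_def] at this ⊢
    rw [Fin.ne_iff_vne] at hne
    omega
  refine le_antisymm (le_blockStart (blockStart_mem_records ρ _) hle)
    (le_blockStart (blockStart_mem_records ρ _) ((blockStart_le ρ _).trans ?_))
  rw [Fin.le_def]
  omega

-- Position `0` is always a record, so the wrap-around `finRotate n (n-1) = 0` ends the last block.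
variable (ρ) in
def blockRotate (i : Fin n) : Fin n :=
  if finRotate n i ∈ records ρ then blockStart ρ i else finRotate n i

lemma eq_of_blockStart_eq (h : blockStart ρ i = blockStart ρ j) (hi : finRotate n i ∈ records ρ)
    (hj : finRotate n j ∈ records ρ) : i = j := by
  by_contra hne
  wlog hlt : i < j generalizing i j
  · exact this h.symm hj hi (Ne.symm hne) (lt_of_le_of_ne (not_lt.1 hlt) (Ne.symm hne))
  have hval : (finRotate n i).val = i.val + 1 := by
    rw [val_finRotate, if_pos (lt_of_le_of_lt hlt j.isLt)]
  have hle := le_blockStart hi (show finRotate n i ≤ j by rw [Fin.le_def, hval]; exact hlt)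
  rw [← h] at hle
  have := blockStart_le ρ i
  rw [Fin.le_def] at hle this
  omega

lemma blockRotate_injective : Function.Injective (blockRotate ρ) := by
  intro i j hij
  unfold blockRotate at hij
  split_ifs at hij with hi hj hj
  · exact eq_of_blockStart_eq hij hi hj
  · exact absurd (hij ▸ blockStart_mem_records ρ _) hj
  · exact absurd (hij.symm ▸ blockStart_mem_records ρ _) hi
  · exact (finRotate n).injective hij

variable (ρ) in
noncomputable def blockPerm : Perm (Fin n) :=
  Equiv.ofBijective (blockRotate ρ) blockRotate_injective.bijective_of_finite

lemma blockPerm_apply_of_mem (h : finRotate n i ∈ records ρ) : blockPerm ρ i = blockStart ρ i :=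
  if_pos h

lemma blockPerm_apply_of_not_mem (h : finRotate n i ∉ records ρ) :
    blockPerm ρ i = finRotate n i :=
  if_neg h

lemma blockStart_blockPerm : blockStart ρ (blockPerm ρ i) = blockStart ρ i := by
  by_cases h : finRotate n i ∈ records ρ
  · rw [blockPerm_apply_of_mem h, blockStart_eq_self (blockStart_mem_records ρ _)]
  · rw [blockPerm_apply_of_not_mem h, blockStart_finRotate h]

lemma blockStart_blockPerm_pow (k : ℕ) : blockStart ρ ((blockPerm ρ ^ k) i) = blockStart ρ i := by
  induction k with
  | zero => rfl
  | succ k ih => rw [pow_succ', Perm.mul_apply, blockStart_blockPerm, ih]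

lemma blockPerm_pow_blockStart (d : ℕ) (hd : i.val = (blockStart ρ i).val + d) :
    (blockPerm ρ ^ d) (blockStart ρ i) = i := by
  induction d generalizing i with
  | zero => exact Fin.ext hd.symm
  | succ d ih =>
    set p := (finRotate n).symm i
    have hp : finRotate n p = i := (finRotate n).apply_symm_apply i
    have hi : finRotate n p ∉ records ρ := fun h => by
      rw [hp] at h
      rw [blockStart_eq_self h] at hd
      omega
    have hval := val_finRotate_of_not_mem_records hi
    have hstart := blockStart_finRotate hi
    rw [hp] at hval hstart
    have hstep : blockPerm ρ p = i := by rw [blockPerm_apply_of_not_mem hi, hp]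
    rw [hstart] at hd
    rw [pow_succ', Perm.mul_apply, hstart, ih (by omega), hstep]

lemma sameCycle_blockPerm_blockStart (i : Fin n) : (blockPerm ρ).SameCycle (blockStart ρ i) i :=
  ⟨(i.val - (blockStart ρ i).val : ℕ), by
    rw [zpow_natCast]
    exact blockPerm_pow_blockStart _ (Nat.add_sub_of_le (blockStart_le ρ i)).symm⟩

lemma sameCycle_blockPerm_iff : (blockPerm ρ).SameCycle i j ↔ blockStart ρ i = blockStart ρ j := by
  refine ⟨fun h => ?_, fun h => ?_⟩
  · obtain ⟨k, -, hk⟩ := h.exists_pow_eq'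
    rw [← hk, blockStart_blockPerm_pow]
  · exact (sameCycle_blockPerm_blockStart i).symm.trans (h ▸ sameCycle_blockPerm_blockStart j)

variable (ρ) in
lemma apply_blockStart_le (i : Fin n) : ρ (blockStart ρ i) ≤ ρ i := by
  obtain ⟨l, hl, hmin⟩ := (Iic i).exists_min_image ρ ⟨i, mem_Iic.2 le_rfl⟩
  have hl_mem : l ∈ records ρ := (mem_records ρ).2 fun k hk =>
    (hmin k (mem_Iic.2 (hk.le.trans (mem_Iic.1 hl)))).lt_of_ne fun he => hk.ne' (ρ.injective he)
  rcases (le_blockStart hl_mem (mem_Iic.1 hl)).lt_or_eq with hlt | heq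
  · exact (apply_lt_of_mem_records (blockStart_mem_records ρ i) hlt).le.trans
      (hmin i (mem_Iic.2 le_rfl))
  · exact heq ▸ hmin i (mem_Iic.2 le_rfl)

lemma mem_records_iff_forall_blockStart_eq :
    i ∈ records ρ ↔ ∀ j, blockStart ρ j = blockStart ρ i → ρ i ≤ ρ j := by
  refine ⟨fun hi j hj => ?_, fun h => ?_⟩
  · rw [blockStart_eq_self hi] at hj
    exact hj ▸ apply_blockStart_le ρ j
  · have hle := h (blockStart ρ i) (blockStart_eq_self (blockStart_mem_records ρ _))
    rw [← ρ.injective ((apply_blockStart_le ρ i).antisymm hle)]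
    exact blockStart_mem_records ρ i

end Blocks

section Foata

variable {n : ℕ} (ρ : Perm (Fin n)) {ρ₁ ρ₂ : Perm (Fin n)} {i : Fin n}

noncomputable def foata : Perm (Fin n) := ρ * blockPerm ρ * ρ⁻¹

def wordCycle : Perm (Fin n) := ρ * finRotate n * ρ⁻¹

lemma foata_apply_apply (i : Fin n) : foata ρ (ρ i) = ρ (blockPerm ρ i) := by
  simp [foata]

lemma wordCycle_apply_apply (i : Fin n) : wordCycle ρ (ρ i) = ρ (finRotate n i) := by
  simp [wordCycle]

lemma inv_apply_mem_records_iff {x : Fin n} :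
    ρ⁻¹ x ∈ records ρ ↔ ∀ y, (foata ρ).SameCycle x y → x ≤ y := by
  simp only [mem_records_iff_forall_blockStart_eq, foata, Perm.sameCycle_conj,
    sameCycle_blockPerm_iff]
  refine ⟨fun h y hy => ?_, fun h j hj => ?_⟩
  · simpa using h (ρ⁻¹ y) hy.symm
  · simpa using h (ρ j) (by simpa using hj.symm)

lemma apply_le_of_foata_eq (h : foata ρ₁ = foata ρ₂) (hagree : ∀ j < i, ρ₁ j = ρ₂ j)
    (h₁ : i ∈ records ρ₁) : ρ₁ i ≤ ρ₂ i := by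
  set j := ρ₂⁻¹ (ρ₁ i)
  have hj : j ∈ records ρ₂ := by
    rw [inv_apply_mem_records_iff, ← h, ← inv_apply_mem_records_iff]
    simpa using h₁
  have hρj : ρ₂ j = ρ₁ i := ρ₂.apply_symm_apply (ρ₁ i)
  rcases lt_trichotomy j i with hlt | heq | hgt
  · exact absurd (ρ₁.injective ((hagree j hlt).trans hρj)) hlt.ne
  · rw [← hρj, heq]
  · exact hρj ▸ (apply_lt_of_mem_records hj hgt).le

lemma apply_eq_of_foata_eq_of_not_mem (h : foata ρ₁ = foata ρ₂) (hagree : ∀ j < i, ρ₁ j = ρ₂ j)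
    (h₁ : i ∉ records ρ₁) : ρ₁ i = ρ₂ i := by
  set p := (finRotate n).symm i
  have hp : finRotate n p = i := (finRotate n).apply_symm_apply i
  have hpi : p < i := by
    have := val_finRotate_of_not_mem_records (hp ▸ h₁ : finRotate n p ∉ records ρ₁)
    rw [hp] at this
    rw [Fin.lt_def]
    omega
  have key : ρ₁ i = ρ₂ (blockPerm ρ₂ p) := by
    rw [← foata_apply_apply, ← h, ← hagree p hpi, foata_apply_apply,
      blockPerm_apply_of_not_mem (hp ▸ h₁), hp]
  by_cases h₂ : finRotate n p ∈ records ρ₂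
  · rw [blockPerm_apply_of_mem h₂] at key
    have hlt := (blockStart_le ρ₂ _).trans_lt hpi
    exact absurd (ρ₁.injective (key.trans (hagree _ hlt).symm)) hlt.ne'
  · rw [key, blockPerm_apply_of_not_mem h₂, hp]

lemma foata_injective : Function.Injective (foata : Perm (Fin n) → Perm (Fin n)) := by
  intro ρ₁ ρ₂ h
  ext1 i
  induction i using WellFoundedLT.induction with
  | ind i ih =>
    by_cases h₁ : i ∈ records ρ₁
    · by_cases h₂ : i ∈ records ρ₂
      · exact (apply_le_of_foata_eq h ih h₁).antisymm
          (apply_le_of_foata_eq h.symm (fun j hj => (ih j hj).symm) h₂)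
      · exact (apply_eq_of_foata_eq_of_not_mem h.symm (fun j hj => (ih j hj).symm) h₂).symm
    · exact apply_eq_of_foata_eq_of_not_mem h ih h₁

lemma hamming_foata_wordCycle_le : hamming (foata ρ) (wordCycle ρ) ≤ #(records ρ) / n := by
  refine div_le_div_of_nonneg_right ?_ (Nat.cast_nonneg n)
  refine Nat.cast_le.2 <| card_le_card_of_injOn (fun x => finRotate n (ρ⁻¹ x)) (fun x hx => ?_)
    (fun x _ y _ hxy => by simpa using hxy)
  obtain ⟨i, rfl⟩ := ρ.surjective x
  by_contra hi
  refine (mem_filter.1 hx).2 ?_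
  simp_all [foata_apply_apply, wordCycle_apply_apply, blockPerm_apply_of_not_mem]

lemma wordCycle_mem (hn : 2 ≤ n) (ρ : Perm (Fin n)) :
    wordCycle ρ ∈ {τ : Perm (Fin n) | τ.IsCycle ∧ #τ.support = n} :=
  ⟨(isCycle_finRotate_of_le hn).conj, by
    rw [wordCycle, Perm.card_support_conj, support_finRotate_of_le hn, card_univ, Fintype.card_fin]⟩

lemma card_filter_wordCycle_eq (hn : 2 ≤ n) {τ : Perm (Fin n)}
    (hτ : τ ∈ {τ : Perm (Fin n) | τ.IsCycle ∧ #τ.support = n}) :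
    #{ρ | wordCycle ρ = τ} = #{ρ | wordCycle ρ = finRotate n} := by
  obtain ⟨z, rfl⟩ := isConj_iff.1 <| (isCycle_finRotate_of_le hn).isConj hτ.1 <| by
    rw [hτ.2, support_finRotate_of_le hn, card_univ, Fintype.card_fin]
  exact card_filter_conj_eq _ z

lemma card_filter_foata_eq (σ : Perm (Fin n)) : #{ρ | foata ρ = σ} = 1 := by
  obtain ⟨ρ, rfl⟩ := Finite.injective_iff_surjective.1 foata_injective σ
  simp [foata_injective.eq_iff, filter_eq']

end Foata

theorem stmt6_general {n : ℕ} :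
    KR (unifOn (Set.univ : Set (Equiv.Perm (Fin n)))) (unifOn {τ | τ.IsCycle ∧ τ.support.card = n}) ≤
      (Real.log n + 1) / n := by
  rcases lt_or_ge n 2 with hn | hn
  · -- There are no `n`-cycles, hence no couplings, and `KR` is the junk value `sInf ∅ = 0`.
    have hC : {τ : Perm (Fin n) | τ.IsCycle ∧ #τ.support = n} = ∅ :=
      Set.eq_empty_of_forall_notMem fun τ ⟨hτ, hcard⟩ => by have := hτ.two_le_card_support; omega
    rw [KR_eq_zero_of_sum_ne (by simp [hC, unifOn])]
    interval_cases n <;> simp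
  · calc _ ≤ ∑ p, lawCoupling foata wordCycle p * hamming p.1 p.2 :=
          KR_le_of_isCoupling <| isCoupling_lawCoupling (fun _ => Set.mem_univ _)
            (fun σ _ => card_filter_foata_eq σ) (wordCycle_mem hn)
            (fun _ => card_filter_wordCycle_eq hn)
      _ = (∑ ρ, hamming (foata ρ) (wordCycle ρ)) / n ! := by
          rw [sum_lawCoupling_mul, Fintype.card_perm, Fintype.card_fin]
      _ ≤ (∑ ρ : Perm (Fin n), (#(records ρ) : ℝ) / n) / n ! := by
          gcongr with ρ
          exact hamming_foata_wordCycle_le ρ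
      _ = harmonic n / n := by
          rw [← sum_div, sum_card_records]
          field_simp
      _ ≤ (Real.log n + 1) / n := by
          gcongr
          linarith [harmonic_le_one_add_log n]

/-- The Kantorovich-Rubinstein distance between the uniform distribution on
`S_n` and the uniform distribution on the set of `n`-cycles is at most
`(ln n + 1)/n`. -/
theorem stmt6 {n : ℕ} (hn : 1 ≤ n) :
    KR (unifOn (Set.univ : Set (Equiv.Perm (Fin n)))) (unifOn {τ | τ.IsCycle ∧ τ.support.card = n}) ≤
      (Real.log n + 1) / n :=
  stmt6_general
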